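/- arXiv:2212.04907 — 5 statements merged into one kernel-verified Lean document; each statement's English description precedes it below -/
import Mathlib

section
/- For a function f analytic on a disk of radius R > |x| centered at 0 with Taylor coefficients a_n, and a real parameter μ with -1/3 ≤ μ ≤ 1 and μ ≠ -1, one has f(μx) = ∑_{n=0}^∞ (μ^n/(μ+1)^{n+1}) ∑_{k=0}^n C(n,k) x^k a_k. -/
/-!
Write `μ ^ k = ∑ⱼ C(k + j, k) μ ^ (k + j) / (μ + 1) ^ (k + j + 1)`, the negative binomial series
in `μ / (μ + 1)`, and substitute it into `f (μ x) = ∑ₖ a k μ ^ k x ^ k`. The resulting double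
series over `(k, j)` is dominated by the same series for `‖μ‖, ‖μ + 1‖`, whose rows sum to
`(‖μ‖ / (‖μ + 1‖ - ‖μ‖)) ^ k ‖a k x ^ k‖ / (‖μ + 1‖ - ‖μ‖)`; this is summable as soon as
`2 ‖μ‖ ≤ ‖μ + 1‖`, i.e. `-1/3 ≤ μ ≤ 1` for real `μ`. The double series may then be summed along
the antidiagonals `k + j = n`, which gives the `n`-th term of the right-hand side.
-/

open Finset

theorem HasSum.sum_antidiagonal {A α : Type*} [AddCommMonoid A] [HasAntidiagonal A]
    [AddCommMonoid α] [TopologicalSpace α] [ContinuousAdd α] [RegularSpace α]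
    {g : A × A → α} {s : α} (h : HasSum g s) :
    HasSum (fun n ↦ ∑ p ∈ antidiagonal n, g p) s :=
  (HasAntidiagonal.sigmaAntidiagonalEquivProd.hasSum_iff.2 h).sigma fun n ↦ by
    simpa [sum_attach] using hasSum_fintype fun p : antidiagonal n ↦ g p

section EulerTerm

variable {𝕜 : Type*} [NormedField 𝕜]

def eulerTerm (m s : 𝕜) (c : ℕ → 𝕜) (p : ℕ × ℕ) : 𝕜 :=
  (p.1 + p.2).choose p.1 * m ^ (p.1 + p.2) / s ^ (p.1 + p.2 + 1) * c p.1

theorem hasSum_eulerTerm_row {m s : 𝕜} (c : ℕ → 𝕜) (h : ‖m‖ < ‖s‖) (k : ℕ) :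
    HasSum (fun j ↦ eulerTerm m s c (k, j)) (m ^ k / (s - m) ^ (k + 1) * c k) := by
  have hs : s ≠ 0 := norm_pos_iff.1 ((norm_nonneg m).trans_lt h)
  have hr : ‖m / s‖ < 1 := by rwa [norm_div, div_lt_one (norm_pos_iff.2 hs)]
  have key := ((hasSum_choose_mul_geometric_of_norm_lt_one k hr).mul_left
    (m ^ k / s ^ (k + 1))).mul_right (c k)
  rw [one_sub_div hs, div_pow, one_div_div, ← mul_div_assoc,
    div_mul_cancel₀ _ (pow_ne_zero _ hs)] at key
  refine key.congr_fun fun j ↦ ?_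
  rw [eulerTerm, add_comm k j, div_pow]
  field_simp
  ring

theorem norm_eulerTerm_le (m s : 𝕜) (c : ℕ → 𝕜) (p : ℕ × ℕ) :
    ‖eulerTerm m s c p‖ ≤ eulerTerm ‖m‖ ‖s‖ (‖c ·‖) p := by
  simp only [eulerTerm, norm_mul, norm_div, norm_pow]
  gcongr
  simpa using Nat.norm_cast_le (α := 𝕜) _

theorem summable_eulerTerm_of_two_mul_le {m s : ℝ} {c : ℕ → ℝ} (hm : 0 ≤ m) (hs : 0 < s)
    (h : 2 * m ≤ s) (hc₀ : ∀ k, 0 ≤ c k) (hc : Summable c) :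
    Summable (eulerTerm m s c) := by
  have hsm : 0 < s - m := by linarith
  have hrow := hasSum_eulerTerm_row c (m := m) (s := s) (by
    rw [Real.norm_of_nonneg hm, Real.norm_of_nonneg hs.le]; linarith)
  refine (summable_prod_of_nonneg fun p ↦ ?_).2 ⟨fun k ↦ (hrow k).summable, ?_⟩
  · have := hc₀ p.1
    unfold eulerTerm; positivity
  simp_rw [(hrow _).tsum_eq]
  refine (hc.div_const (s - m)).of_nonneg_of_le (fun k ↦ ?_) fun k ↦ ?_
  · have := hc₀ k
    positivity
  · calc m ^ k / (s - m) ^ (k + 1) * c k = (m / (s - m)) ^ k * (c k / (s - m)) := by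
          rw [div_pow, pow_succ]; field_simp
      _ ≤ c k / (s - m) :=
          mul_le_of_le_one_left (div_nonneg (hc₀ k) hsm.le)
            (pow_le_one₀ (by positivity) ((div_le_one hsm).2 (by linarith)))

theorem sum_antidiagonal_eulerTerm (m s : 𝕜) (c : ℕ → 𝕜) (n : ℕ) :
    ∑ p ∈ antidiagonal n, eulerTerm m s c p =
      m ^ n / s ^ (n + 1) * ∑ k ∈ range (n + 1), n.choose k * c k := by
  rw [mul_sum, ← Nat.sum_antidiagonal_eq_sum_range_succ
    fun i _ ↦ m ^ n / s ^ (n + 1) * (n.choose i * c i)]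
  refine sum_congr rfl fun p hp ↦ ?_
  rw [eulerTerm, mem_antidiagonal.1 hp]
  ring

theorem hasSum_euler_transform [CompleteSpace 𝕜] {μ : 𝕜} (c : ℕ → 𝕜)
    (hμ : 2 * ‖μ‖ ≤ ‖μ + 1‖) (hc : Summable (‖c ·‖)) :
    HasSum (fun n ↦ μ ^ n / (μ + 1) ^ (n + 1) * ∑ k ∈ range (n + 1), n.choose k * c k)
      (∑' k, μ ^ k * c k) := by
  have hμ₁ : 0 < ‖μ + 1‖ := by
    rcases eq_or_ne μ 0 with rfl | hμ₀
    · simp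
    · exact (mul_pos two_pos (norm_pos_iff.2 hμ₀)).trans_le hμ
  have hsum : Summable (eulerTerm μ (μ + 1) c) :=
    (summable_eulerTerm_of_two_mul_le (norm_nonneg μ) hμ₁ hμ (fun k ↦ norm_nonneg (c k))
      hc).of_norm_bounded (norm_eulerTerm_le μ (μ + 1) c)
  have hrow (k : ℕ) : HasSum (fun j ↦ eulerTerm μ (μ + 1) c (k, j)) (μ ^ k * c k) := by
    simpa using hasSum_eulerTerm_row (m := μ) (s := μ + 1) c (by linarith [norm_nonneg μ]) k
  rw [(hsum.hasSum.prod_fiberwise hrow).tsum_eq]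
  simpa only [sum_antidiagonal_eulerTerm] using hsum.hasSum.sum_antidiagonal

end EulerTerm

theorem series_with_parameter_general (f : ℂ → ℂ) (a : ℕ → ℂ) (R : ℝ)
    (x : ℂ) (hx : ‖x‖ < R)
    (hf : ∀ t : ℂ, ‖t‖ < R → HasSum (fun n : ℕ => a n * t ^ n) (f t))
    (μ : ℝ) (hμ1 : -1/3 ≤ μ) (hμ2 : μ ≤ 1) :
    f ((μ : ℂ) * x) =
      ∑' n : ℕ, (μ : ℂ) ^ n / ((μ : ℂ) + 1) ^ (n + 1) *
        ∑ k ∈ range (n + 1), (n.choose k : ℂ) * x ^ k * a k := by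
  have hμ : 2 * ‖(μ : ℂ)‖ ≤ ‖(μ : ℂ) + 1‖ := by
    rw [← Complex.ofReal_one, ← Complex.ofReal_add, Complex.norm_real, Complex.norm_real,
      Real.norm_eq_abs, Real.norm_eq_abs, abs_of_pos (by linarith : 0 < μ + 1)]
    rcases abs_cases μ with ⟨h, _⟩ | ⟨h, _⟩ <;> linarith
  have hμx : ‖(μ : ℂ) * x‖ < R := by
    rw [norm_mul]
    exact (mul_le_of_le_one_left (norm_nonneg x) (by
      rw [Complex.norm_real, Real.norm_eq_abs]; exact abs_le.2 ⟨by linarith, hμ2⟩)).trans_lt hx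
  have hc : Summable fun k ↦ ‖x ^ k * a k‖ :=
    summable_norm_iff.2 ((hf x hx).summable.congr fun k ↦ mul_comm _ _)
  calc f (μ * x) = ∑' k, (μ : ℂ) ^ k * (x ^ k * a k) :=
        (hf _ hμx).tsum_eq.symm.trans (tsum_congr fun k ↦ by ring)
    _ = _ := by simpa only [mul_assoc] using (hasSum_euler_transform _ hμ hc).tsum_eq.symm

theorem series_with_parameter (f : ℂ → ℂ) (a : ℕ → ℂ) (R : ℝ)
    (x : ℂ) (hx : ‖x‖ < R)
    (hf : ∀ t : ℂ, ‖t‖ < R → HasSum (fun n : ℕ => a n * t ^ n) (f t))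
    (μ : ℝ) (hμ1 : -1/3 ≤ μ) (hμ2 : μ ≤ 1) (hμ3 : μ ≠ -1) :
    f ((μ : ℂ) * x) =
      ∑' n : ℕ, (μ : ℂ) ^ n / ((μ : ℂ) + 1) ^ (n + 1) *
        ∑ k ∈ range (n + 1), (n.choose k : ℂ) * x ^ k * a k :=
  series_with_parameter_general f a R x hx hf μ hμ1 hμ2
end

section
/- π = ∑_{n=1}^∞ (μ^n/(μ+1)^{n+1}) ∑_{k=1}^n C(n,k) (1/μ^k)((3^k-1)/4^k) ζ(k+1) for μ with 0 < μ ≤ 1 (Amore's formula). -/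
open Finset Filter

/-!
Expand `ζ(k + 1) = ∑ₘ (m + 1)^{-(k+1)}` and exchange the summations over `k` and `m`: by the
binomial theorem the sum over `k` collapses, and the `(n, m)` term of the resulting double series
of nonnegative reals is `((μ + 3c)^{n+1} - (μ + c)^{n+1}) / ((μ + 1)^{n+2} (m + 1))` with
`c = 1 / (4(m + 1))`. Summing it over `n` instead is a difference of two geometric series, equal to
`4 / (4m + 1) - 4 / (4m + 3)`, and these add up to `π` by Leibniz's series.
-/

lemma hasSum_leibniz_pairs :
    HasSum (fun m : ℕ => 1 / (4 * (m : ℝ) + 1) - 1 / (4 * (m : ℝ) + 3)) (Real.pi / 4) := by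
  have hpair (K : ℕ) : ∑ m ∈ range K, (1 / (4 * (m : ℝ) + 1) - 1 / (4 * (m : ℝ) + 3)) =
      ∑ i ∈ range (2 * K), (-1 : ℝ) ^ i / (2 * i + 1) := by
    induction K with
    | zero => simp
    | succ K ih =>
      rw [show 2 * (K + 1) = 2 * K + 1 + 1 by ring, sum_range_succ, sum_range_succ,
        sum_range_succ, ih, pow_succ, pow_mul]
      push_cast
      ring
  rw [hasSum_iff_tendsto_nat_of_nonneg fun m => sub_nonneg.2 <| by gcongr; norm_num]
  exact (Real.tendsto_sum_pi_div_four.comp (tendsto_id.const_mul_atTop' two_pos)).congr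
    fun K => (hpair K).symm

lemma hasSum_riemannZeta_nat_add_one {k : ℕ} (hk : 1 ≤ k) :
    HasSum (fun m : ℕ => 1 / ((m : ℂ) + 1) ^ (k + 1)) (riemannZeta ((k : ℂ) + 1)) := by
  have hs : 1 < ((k : ℂ) + 1).re := by
    simpa [Nat.pos_iff_ne_zero, Nat.one_le_iff_ne_zero] using hk
  have hsum : Summable (fun m : ℕ => 1 / ((m : ℂ) + 1) ^ (k + 1)) := by
    have := (summable_nat_add_iff 1).2 (Complex.summable_one_div_nat_cpow.2 hs)
    simpa [← Complex.cpow_natCast] using this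
  rw [zeta_eq_tsum_one_div_nat_add_one_cpow hs]
  exact_mod_cast hsum.hasSum

lemma sum_Icc_choose_mul_pow {R : Type*} [CommRing R] (x : R) (N : ℕ) :
    ∑ k ∈ Icc 1 N, (N.choose k : R) * x ^ k = (1 + x) ^ N - 1 := by
  rw [add_comm, add_pow, range_eq_Ico, sum_eq_sum_Ico_succ_bot (Nat.succ_pos N)]
  simp only [one_pow, mul_one, pow_zero, Nat.choose_zero_right, Nat.cast_one, zero_add,
    add_sub_cancel_left, mul_comm]
  rw [Nat.succ_eq_add_one, Ico_add_one_right_eq_Icc]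

lemma hasSum_pow_div_pow_succ {μ a : ℝ} (ha₀ : 0 ≤ μ + a) (ha₁ : a < 1) :
    HasSum (fun n : ℕ => (μ + a) ^ (n + 1) / (μ + 1) ^ (n + 2))
      (1 / (1 - a) - 1 / (μ + 1)) := by
  have hμ : 0 < μ + 1 := by linarith
  have hr : (μ + a) / (μ + 1) < 1 := (div_lt_one hμ).2 (by linarith)
  have hval :
      (μ + a) / (μ + 1) ^ 2 * (1 - (μ + a) / (μ + 1))⁻¹ = 1 / (1 - a) - 1 / (μ + 1) := by
    rw [one_sub_div hμ.ne', show μ + 1 - (μ + a) = 1 - a by ring]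
    have : 1 - a ≠ 0 := by linarith
    field_simp
    ring
  refine hval ▸ ((hasSum_geometric_of_lt_one (by positivity) hr).mul_left _).congr_fun fun n => ?_
  rw [div_pow]
  field_simp
  ring

noncomputable def amoreSummand (μ : ℝ) (n m : ℕ) : ℝ :=
  ((μ + 3 / (4 * ((m : ℝ) + 1))) ^ (n + 1) - (μ + 1 / (4 * ((m : ℝ) + 1))) ^ (n + 1)) /
    ((μ + 1) ^ (n + 2) * ((m : ℝ) + 1))

lemma amoreSummand_nonneg {μ : ℝ} (hμ : 0 ≤ μ) (n m : ℕ) : 0 ≤ amoreSummand μ n m := by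
  unfold amoreSummand
  have hle :
      (μ + 1 / (4 * ((m : ℝ) + 1))) ^ (n + 1) ≤ (μ + 3 / (4 * ((m : ℝ) + 1))) ^ (n + 1) := by
    gcongr; norm_num
  have := sub_nonneg.2 hle
  positivity

lemma hasSum_amoreSummand_left {μ : ℝ} (hμ : 0 ≤ μ) (m : ℕ) :
    HasSum (fun n => amoreSummand μ n m)
      (4 * (1 / (4 * (m : ℝ) + 1) - 1 / (4 * (m : ℝ) + 3))) := by
  have hm : (1 : ℝ) ≤ (m : ℝ) + 1 := by simp
  have h3 : 3 / (4 * ((m : ℝ) + 1)) < 1 := (div_lt_one (by positivity)).2 (by linarith)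
  have h1 : 1 / (4 * ((m : ℝ) + 1)) < 1 := (div_lt_one (by positivity)).2 (by linarith)
  have hval : (1 / (1 - 3 / (4 * ((m : ℝ) + 1))) - 1 / (μ + 1) -
      (1 / (1 - 1 / (4 * ((m : ℝ) + 1))) - 1 / (μ + 1))) / ((m : ℝ) + 1) =
      4 * (1 / (4 * (m : ℝ) + 1) - 1 / (4 * (m : ℝ) + 3)) := by
    have e3 : 1 - 3 / (4 * ((m : ℝ) + 1)) = (4 * m + 1) / (4 * ((m : ℝ) + 1)) := by
      field_simp; ring
    have e1 : 1 - 1 / (4 * ((m : ℝ) + 1)) = (4 * m + 3) / (4 * ((m : ℝ) + 1)) := by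
      field_simp; ring
    rw [e3, e1]
    field_simp
    ring
  refine hval ▸ (((hasSum_pow_div_pow_succ (by positivity) h3).sub
    (hasSum_pow_div_pow_succ (by positivity) h1)).div_const _).congr_fun fun n => ?_
  rw [amoreSummand, ← sub_div, div_div]

lemma amoreSummand_eq_sum {μ : ℝ} (hμ : μ ≠ 0) (n m : ℕ) :
    amoreSummand μ n m = μ ^ (n + 1) / (μ + 1) ^ (n + 2) *
      ∑ k ∈ Icc 1 (n + 1), (Nat.choose (n + 1) k : ℝ) * (1 / μ ^ k) * ((3 ^ k - 1) / 4 ^ k) *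
        (1 / ((m : ℝ) + 1) ^ (k + 1)) := by
  set c := 1 / (4 * ((m : ℝ) + 1))
  have hsum : ∑ k ∈ Icc 1 (n + 1), (Nat.choose (n + 1) k : ℝ) * (1 / μ ^ k) *
      ((3 ^ k - 1) / 4 ^ k) * (1 / ((m : ℝ) + 1) ^ (k + 1)) =
      (∑ k ∈ Icc 1 (n + 1), (Nat.choose (n + 1) k : ℝ) * (3 * c / μ) ^ k -
        ∑ k ∈ Icc 1 (n + 1), (Nat.choose (n + 1) k : ℝ) * (c / μ) ^ k) /
        ((m : ℝ) + 1) := by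
    rw [← sum_sub_distrib, sum_div]
    refine sum_congr rfl fun k _ => ?_
    simp only [c, div_pow, mul_pow, one_pow]
    field_simp
    ring
  have h3 : μ + 3 / (4 * ((m : ℝ) + 1)) = μ * (1 + 3 * c / μ) := by
    simp only [c]; field_simp
  have h1 : μ + 1 / (4 * ((m : ℝ) + 1)) = μ * (1 + c / μ) := by
    simp only [c]; field_simp
  rw [hsum, sum_Icc_choose_mul_pow, sum_Icc_choose_mul_pow, amoreSummand, h3, h1, mul_pow, mul_pow]
  field_simp
  ring

lemma hasSum_amoreSummand_right {μ : ℝ} (hμ : μ ≠ 0) (n : ℕ) :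
    HasSum (fun m => (amoreSummand μ n m : ℂ))
      ((μ : ℂ) ^ (n + 1) / ((μ : ℂ) + 1) ^ (n + 2) *
        ∑ k ∈ Icc 1 (n + 1), (Nat.choose (n + 1) k : ℂ) * (1 / (μ : ℂ) ^ k) *
          (((3 : ℂ) ^ k - 1) / 4 ^ k) * riemannZeta ((k : ℂ) + 1)) := by
  refine ((hasSum_sum fun k hk => (hasSum_riemannZeta_nat_add_one (mem_Icc.1 hk).1).mul_left
    _).mul_left _).congr_fun fun m => ?_
  rw [amoreSummand_eq_sum hμ]
  push_cast
  rfl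

lemma pi_eq_tsum_tsum_amoreSummand {μ : ℝ} (hμ : 0 ≤ μ) :
    Real.pi = ∑' n, ∑' m, amoreSummand μ n m := by
  have hleibniz := hasSum_leibniz_pairs.mul_left 4
  have hsummable : Summable (Function.uncurry fun m n => amoreSummand μ n m) := by
    refine (summable_prod_of_nonneg fun p => amoreSummand_nonneg hμ p.2 p.1).2
      ⟨fun m => (hasSum_amoreSummand_left hμ m).summable,
        hleibniz.summable.congr fun m => (hasSum_amoreSummand_left hμ m).tsum_eq.symm⟩
  calc Real.pi = ∑' m, ∑' n, amoreSummand μ n m := by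
        rw [tsum_congr fun m => (hasSum_amoreSummand_left hμ m).tsum_eq, hleibniz.tsum_eq]
        ring
    _ = ∑' n, ∑' m, amoreSummand μ n m := hsummable.tsum_comm.symm

theorem amore_pi_general (μ : ℝ) (hμ0 : 0 < μ) :
    (Real.pi : ℂ) = ∑' n : ℕ, (μ : ℂ) ^ (n + 1) / ((μ : ℂ) + 1) ^ (n + 2) *
        ∑ k ∈ Icc 1 (n + 1), (Nat.choose (n + 1) k : ℂ) * (1 / (μ : ℂ) ^ k) *
          (((3 : ℂ) ^ k - 1) / 4 ^ k) * riemannZeta ((k : ℂ) + 1) := by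
  rw [pi_eq_tsum_tsum_amoreSummand hμ0.le, Complex.ofReal_tsum]
  refine tsum_congr fun n => ?_
  rw [Complex.ofReal_tsum]
  exact (hasSum_amoreSummand_right hμ0.ne' n).tsum_eq

theorem amore_pi (μ : ℝ) (hμ0 : 0 < μ) (hμ1 : μ ≤ 1) :
    (Real.pi : ℂ) = ∑' n : ℕ, (μ : ℂ) ^ (n + 1) / ((μ : ℂ) + 1) ^ (n + 2) *
        ∑ k ∈ Icc 1 (n + 1), (Nat.choose (n + 1) k : ℂ) * (1 / (μ : ℂ) ^ k) *
          (((3 : ℂ) ^ k - 1) / 4 ^ k) * riemannZeta ((k : ℂ) + 1) :=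
  amore_pi_general μ hμ0
end

section
/- For |x| < 1 real, x ≥ 0, and 0 < μ ≤ 1, ln Γ(x+1) + γx = ∑_{n=0}^∞ (μ^n/(μ+1)^{n+1}) ∑_{k=1}^n C(n,k) (x^{k+1}/(μ^k (k+1)))(-1)^{k-1} ζ(k+1). -/
/-!
Taking logarithms in the Weierstrass product gives
`log Γ(1 + x) + γ x = ∑ₘ (x / (m + 1) - log (1 + x / (m + 1)))` for `x > -1`. For
`|x| < 1`, expanding each logarithm in its Taylor series produces an absolutely convergent double
series; summing it over `m` first yields
`log Γ(1 + x) + γ x = ∑_{k ≥ 1} (-1)^(k-1) ζ(k + 1) x^(k+1) / (k + 1)`.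

The right-hand side of the theorem is the Euler transform with parameter `μ > 0` of this series.
For each `k` the weights `C(n, k) μ^(n-k) / (μ + 1)^(n+1)` sum to `1` over `n` (negative binomial
series at `μ / (μ + 1)`), so for an absolutely convergent series exchanging the two summations
returns the original sum.
-/

open Finset Filter Topology Real

theorem Summable.hasSum_of_prod_fiberwise {α β γ : Type*} [AddCommMonoid α]
    [TopologicalSpace α] [ContinuousAdd α] [RegularSpace α] [T2Space α] {f : β × γ → α}
    (hf : Summable f) {g : β → α} {h : γ → α}
    (hg : ∀ b, HasSum (fun c => f (b, c)) (g b)) (hh : ∀ c, HasSum (fun b => f (b, c)) (h c))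
    {a : α} (ha : HasSum g a) : HasSum h a := by
  rw [ha.unique (hf.hasSum.prod_fiberwise hg)]
  exact ((Equiv.prodComm γ β).hasSum_iff.mpr hf.hasSum).prod_fiberwise hh

namespace Real

lemma sum_range_log_nat_add_one (n : ℕ) :
    ∑ m ∈ range n, log ((m : ℝ) + 1) = log (n.factorial : ℝ) := by
  rw [← log_prod fun m _ => by positivity, ← prod_range_add_one_eq_factorial]
  push_cast
  rfl

lemma sum_range_div_sub_log_one_add_div {x : ℝ} (hx : -1 < x) {n : ℕ} (hn : n ≠ 0) :
    ∑ m ∈ range n, (x / (m + 1) - log (1 + x / (m + 1))) =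
      BohrMollerup.logGammaSeq (x + 1) n + x * eulerMascheroniSeq' n +
        (log (n + (x + 1)) - log n) := by
  have hlog (m : ℕ) : log (1 + x / (m + 1)) = log (x + 1 + m) - log (m + 1) := by
    have : (0 : ℝ) ≤ m := m.cast_nonneg
    rw [← log_div (by linarith) (by positivity)]
    congr 1
    field_simp
    ring
  rw [sum_sub_distrib, sum_congr rfl fun m _ => hlog m, sum_sub_distrib,
    sum_range_log_nat_add_one]
  simp only [div_eq_mul_inv, ← mul_sum]
  rw [BohrMollerup.logGammaSeq, eulerMascheroniSeq', if_neg hn, harmonic, sum_range_succ]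
  push_cast
  rw [show (n : ℝ) + (x + 1) = x + 1 + n by ring]
  ring

theorem hasSum_div_sub_log_one_add_div {x : ℝ} (hx : -1 < x) :
    HasSum (fun m : ℕ => x / (m + 1) - log (1 + x / (m + 1)))
      (log (Gamma (x + 1)) + eulerMascheroniConstant * x) := by
  have hpos (m : ℕ) : 0 < 1 + x / (m + 1) := by
    have : (0 : ℝ) ≤ m := m.cast_nonneg
    have : -1 < x / (m + 1) := by rw [lt_div_iff₀ (by positivity)]; linarith
    linarith
  refine (hasSum_iff_tendsto_nat_of_nonneg
    (fun m => by linarith [log_le_sub_one_of_pos (hpos m)]) _).mpr ?_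
  have hlim := ((BohrMollerup.tendsto_log_gamma (by linarith : 0 < x + 1)).add
    (tendsto_eulerMascheroniSeq'.const_mul x)).add
    ((tendsto_log_comp_add_sub_log (x + 1)).comp tendsto_natCast_atTop_atTop)
  rw [add_zero, mul_comm] at hlim
  refine hlim.congr' ?_
  filter_upwards [eventually_ne_atTop 0] with n hn
  exact (sum_range_div_sub_log_one_add_div hx hn).symm

theorem hasSum_sub_log_one_add {t : ℝ} (ht : |t| < 1) :
    HasSum (fun j : ℕ => (-1) ^ j * t ^ (j + 2) / (j + 2)) (t - log (1 + t)) := by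
  have h := (hasSum_nat_add_iff' 1).mpr
    (hasSum_pow_div_log_of_abs_lt_one (x := -t) (by rwa [abs_neg]))
  rw [show -log (1 - -t) - ∑ i ∈ range 1, (-t) ^ (i + 1) / (i + 1) = t - log (1 + t) by
    simp only [sub_neg_eq_add, range_one, sum_singleton, zero_add, pow_one, CharP.cast_eq_zero,
      div_one]
    ring] at h
  refine h.congr_fun fun j => ?_
  push_cast
  rw [neg_pow]
  ring

end Real

lemma hasSum_one_div_nat_add_one_pow_riemannZeta {k : ℕ} (hk : 1 < k) :
    HasSum (fun m : ℕ => 1 / ((m : ℂ) + 1) ^ k) (riemannZeta k) := by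
  have h := HurwitzZeta.hasSum_hurwitzZeta_of_one_lt_re (a := 1) ⟨zero_le_one, le_rfl⟩
    (s := k) (by simpa using hk)
  rw [show ((1 : ℝ) : UnitAddCircle) = 0 from AddCircle.coe_period 1,
    HurwitzZeta.hurwitzZeta_zero] at h
  simpa [Complex.cpow_natCast] using h

lemma summable_one_div_nat_add_one_sq : Summable (fun m : ℕ => 1 / ((m : ℝ) + 1) ^ 2) := by
  simpa using (summable_nat_add_iff 1).mpr (Real.summable_one_div_nat_pow.mpr one_lt_two)

lemma norm_div_nat_add_one_pow_le {x : ℝ} (hx : |x| ≤ 1) (m j : ℕ) :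
    ‖((x : ℂ) / (m + 1)) ^ (j + 2)‖ ≤ 1 / ((m : ℝ) + 1) ^ 2 * |x| ^ j := by
  have hm : (1 : ℝ) ≤ m + 1 := by linarith [(m.cast_nonneg : (0 : ℝ) ≤ m)]
  have hnorm : ‖(x : ℂ) / (m + 1)‖ = |x| / (m + 1) := by
    rw [norm_div, Complex.norm_real, Real.norm_eq_abs]
    norm_cast
  rw [norm_pow, hnorm, pow_add, mul_comm, one_div, ← inv_pow]
  gcongr
  · rw [← one_div]
    gcongr
  · exact div_le_self (abs_nonneg x) hm

theorem hasSum_log_Gamma_add_one_of_abs_lt_one {x : ℝ} (hx : |x| < 1) :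
    HasSum (fun j : ℕ => (-1) ^ j * riemannZeta (j + 2) * x ^ (j + 2) / (j + 2))
      ((log (Gamma (x + 1)) + eulerMascheroniConstant * x : ℝ) : ℂ) := by
  set G : ℕ × ℕ → ℂ := fun p =>
    (-1) ^ p.2 * ((x : ℂ) / (p.1 + 1)) ^ (p.2 + 2) / (p.2 + 2)
  have hG : Summable G := by
    refine Summable.of_norm_bounded
      (summable_one_div_nat_add_one_sq.mul_of_nonneg
        (summable_geometric_of_lt_one (abs_nonneg x) hx) (fun _ => by positivity)
        (fun _ => by positivity)) fun ⟨m, j⟩ => ?_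
    have hj : ‖(j : ℂ) + 2‖ = j + 2 := by exact_mod_cast Complex.norm_natCast (j + 2)
    rw [norm_div, norm_mul, norm_pow, norm_neg, norm_one, one_pow, one_mul, hj]
    exact (div_le_self (norm_nonneg _) (by linarith [(j.cast_nonneg : (0 : ℝ) ≤ j)])).trans
      (norm_div_nat_add_one_pow_le hx.le m j)
  have hrow (m : ℕ) : HasSum (fun j => G (m, j))
      ((x / (m + 1) - log (1 + x / (m + 1)) : ℝ) : ℂ) := by
    have hxm : |x / (m + 1)| < 1 := by
      rw [abs_div, abs_of_pos (by positivity : (0 : ℝ) < m + 1), div_lt_one (by positivity)]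
      linarith [(m.cast_nonneg : (0 : ℝ) ≤ m)]
    refine (Complex.hasSum_ofReal.mpr (hasSum_sub_log_one_add hxm)).congr_fun fun j => ?_
    simp [G]
  have hcol (j : ℕ) : HasSum (fun m => G (m, j))
      ((-1) ^ j * riemannZeta (j + 2) * x ^ (j + 2) / (j + 2)) := by
    have h := (hasSum_one_div_nat_add_one_pow_riemannZeta (k := j + 2) (by omega)).mul_left
      ((-1) ^ j * (x : ℂ) ^ (j + 2) / (j + 2))
    push_cast at h
    rw [show (-1) ^ j * riemannZeta (j + 2) * (x : ℂ) ^ (j + 2) / (j + 2) =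
      (-1) ^ j * (x : ℂ) ^ (j + 2) / (j + 2) * riemannZeta (j + 2) by ring]
    exact h.congr_fun fun m => by simp only [G, div_pow]; ring
  exact hG.hasSum_of_prod_fiberwise hrow hcol
    (Complex.hasSum_ofReal.mpr (hasSum_div_sub_log_one_add_div (by linarith [neg_abs_le x])))

lemma hasSum_choose_mul_pow_div_pow {μ : ℝ} (hμ : 0 ≤ μ) (k : ℕ) :
    HasSum (fun n : ℕ => (n.choose k : ℝ) * μ ^ (n - k) / (μ + 1) ^ (n + 1)) 1 := by
  have hr : ‖μ / (μ + 1)‖ < 1 := by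
    rw [Real.norm_eq_abs, abs_of_nonneg (by positivity), div_lt_one (by positivity)]
    linarith
  have h := (hasSum_choose_mul_geometric_of_norm_lt_one k hr).mul_left (1 / (μ + 1) ^ (k + 1))
  rw [show 1 - μ / (μ + 1) = 1 / (μ + 1) by field_simp; ring, one_div_pow, one_div_one_div,
    one_div_mul_cancel (by positivity)] at h
  rw [← hasSum_nat_add_iff' k, sum_eq_zero fun n hn => by
    rw [Nat.choose_eq_zero_of_lt (mem_range.mp hn)]; simp, sub_zero]
  refine h.congr_fun fun n => ?_
  rw [Nat.add_sub_cancel, div_pow, show n + k + 1 = n + (k + 1) by ring, pow_add]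
  field_simp

theorem hasSum_sum_range_choose_smul {E : Type*} [NormedAddCommGroup E] [NormedSpace ℝ E]
    [CompleteSpace E] {a : ℕ → E} (ha : Summable (‖a ·‖)) {μ : ℝ} (hμ : 0 ≤ μ) :
    HasSum (fun n => ∑ k ∈ range (n + 1),
      ((n.choose k : ℝ) * μ ^ (n - k) / (μ + 1) ^ (n + 1)) • a k) (∑' k, a k) := by
  set w : ℕ → ℕ → ℝ := fun k n => (n.choose k : ℝ) * μ ^ (n - k) / (μ + 1) ^ (n + 1)
  have hw : ∀ k n, 0 ≤ w k n := fun k n => by positivity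
  have hw1 : ∀ k, HasSum (w k) 1 := hasSum_choose_mul_pow_div_pow hμ
  have hF : Summable fun p : ℕ × ℕ => w p.1 p.2 • a p.1 := by
    refine Summable.of_norm ?_
    simp only [norm_smul, Real.norm_of_nonneg (hw _ _)]
    refine (summable_prod_of_nonneg fun p => by positivity).mpr
      ⟨fun k => ((hw1 k).mul_right ‖a k‖).summable, ?_⟩
    simpa only [tsum_mul_right, (hw1 _).tsum_eq, one_mul] using ha
  refine hF.hasSum_of_prod_fiberwise (fun k => ?_) (fun n => ?_) ha.of_norm.hasSum
  · simpa using (hw1 k).smul_const (a k)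
  · refine hasSum_sum_of_ne_finset_zero fun k hk => ?_
    simp only [w]
    rw [Nat.choose_eq_zero_of_lt (by simpa [Nat.lt_succ_iff] using hk)]
    simp

theorem logGamma_param_general (x μ : ℝ) (hx : |x| < 1)
    (hμ0 : 0 < μ) :
    ((Real.log (Real.Gamma (x + 1)) + Real.eulerMascheroniConstant * x : ℝ) : ℂ) =
      ∑' n : ℕ, (μ : ℂ) ^ n / ((μ : ℂ) + 1) ^ (n + 1) *
        ∑ k ∈ Icc 1 n, (n.choose k : ℂ) *
          ((x : ℂ) ^ (k + 1) / ((μ : ℂ) ^ k * ((k : ℂ) + 1))) *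
          (-1) ^ (k - 1) * riemannZeta ((k : ℂ) + 1) := by
  -- `a 0` must be `0`: the paper's inner sum starts at `k = 1`, and `riemannZeta 1 ≠ 0`.
  set a : ℕ → ℂ := fun k =>
    if k = 0 then 0 else (-1) ^ (k - 1) * riemannZeta (k + 1) * x ^ (k + 1) / (k + 1)
  have ha : HasSum a ((log (Gamma (x + 1)) + eulerMascheroniConstant * x : ℝ) : ℂ) := by
    refine (hasSum_nat_add_iff' 1).mp ?_
    simpa [a, add_assoc, one_add_one_eq_two] using hasSum_log_Gamma_add_one_of_abs_lt_one hx
  rw [← ha.tsum_eq]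
  have hT := hasSum_sum_range_choose_smul (summable_norm_iff.mpr ha.summable) hμ0.le
  refine hT.tsum_eq.symm.trans (tsum_congr fun n => ?_)
  rw [range_eq_Ico, sum_eq_sum_Ico_succ_bot n.succ_pos, Nat.zero_add, Nat.succ_eq_add_one,
    Ico_add_one_right_eq_Icc, mul_sum]
  simp only [a, if_pos, smul_zero, zero_add]
  refine sum_congr rfl fun k hk => ?_
  obtain ⟨hk1, hkn⟩ := mem_Icc.mp hk
  rw [if_neg (by omega), Complex.real_smul]
  push_cast
  rw [pow_sub₀ _ (by exact_mod_cast hμ0.ne') hkn]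
  field_simp

theorem logGamma_param (x μ : ℝ) (hx : |x| < 1) (hx0 : 0 ≤ x)
    (hμ0 : 0 < μ) (hμ1 : μ ≤ 1) :
    ((Real.log (Real.Gamma (x + 1)) + Real.eulerMascheroniConstant * x : ℝ) : ℂ) =
      ∑' n : ℕ, (μ : ℂ) ^ n / ((μ : ℂ) + 1) ^ (n + 1) *
        ∑ k ∈ Icc 1 n, (n.choose k : ℂ) *
          ((x : ℂ) ^ (k + 1) / ((μ : ℂ) ^ k * ((k : ℂ) + 1))) *
          (-1) ^ (k - 1) * riemannZeta ((k : ℂ) + 1) :=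
  logGamma_param_general x μ hx hμ0
end

section
/- Euler's constant satisfies γ = ∑_{n=0}^∞ (1/2^{n+1}) ∑_{k=1}^n C(n,k) (-1)^{k-1} ζ(k+1)/(k+1). -/
/-!
Write `x = 1/(m+1)` and expand `ζ(k+1) = ∑ₘ x^(k+1)`. For fixed `n` the binomial sum over `k`
collapses to `x - (1 - (1-x)^(n+1))/(n+1)`, which is nonnegative by Bernoulli's inequality.
Against the weights `2^-(n+1)` these sum over `n`, by the series of `log 2` and of
`log (2/(1+x))`, to `x - log (1+x)`, and summing that over `m` telescopes to
`lim (H_N - log (N+1)) = γ`. Nonnegativity lets the two summations be interchanged.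
-/

open Finset

theorem sum_Icc_choose_mul_pow_div {K : Type*} [Field K] [CharZero K] (n : ℕ) (t : K) :
    ∑ k ∈ Icc 1 n, (n.choose k : K) * (-1) ^ (k - 1) * t ^ (k + 1) / (k + 1) =
      t - (1 - (1 - t) ^ (n + 1)) / (n + 1) := by
  have hn : (n + 1 : K) ≠ 0 := n.cast_add_one_ne_zero
  have hbinom : (1 - t) ^ (n + 1) =
      ∑ i ∈ range n, ((n + 1).choose (i + 2) : K) * (-t) ^ (i + 2) - (n + 1) * t + 1 := by
    rw [sub_eq_add_neg, add_comm, add_pow, sum_range_succ', sum_range_succ']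
    simp only [zero_add, Nat.choose_one_right, Nat.choose_zero_right, one_pow, pow_zero, pow_one,
      mul_one]
    push_cast
    ring_nf
  have hterm (i : ℕ) :
      (n.choose (1 + i) : K) * (-1) ^ (1 + i - 1) * t ^ (1 + i + 1) / (↑(1 + i) + 1) =
        ((n + 1).choose (i + 2) : K) * (-t) ^ (i + 2) / (n + 1) := by
    have h : ((n + 1 : ℕ) : K) * n.choose (i + 1) =
        (n + 1).choose (i + 2) * ((i + 1 : ℕ) + 1 : K) := by
      exact_mod_cast Nat.add_one_mul_choose_eq n (i + 1)
    rw [div_eq_div_iff (Nat.cast_add_one_ne_zero _) hn, neg_pow t, add_comm 1 i,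
      add_tsub_cancel_right]
    push_cast at h ⊢
    linear_combination (-1) ^ i * t ^ (i + 2) * h
  rw [← Ico_add_one_right_eq_Icc, sum_Ico_eq_sum_range, add_tsub_cancel_right, hbinom]
  simp_rw [hterm, ← sum_div]
  field_simp
  ring

theorem one_sub_one_sub_pow_div_le {x : ℝ} (hx : x ≤ 2) (n : ℕ) :
    (1 - (1 - x) ^ (n + 1)) / (n + 1) ≤ x := by
  have h := one_add_mul_le_pow (a := -x) (by linarith) (n + 1)
  rw [← sub_eq_add_neg] at h
  rw [div_le_iff₀ (by positivity)]
  push_cast at h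
  linarith

theorem hasSum_div_two_pow_mul {x : ℝ} (hx₀ : -1 < x) (hx₁ : x < 3) :
    HasSum (fun n : ℕ => 1 / 2 ^ (n + 1) * (x - (1 - (1 - x) ^ (n + 1)) / (n + 1)))
      (x - Real.log (1 + x)) := by
  have hgeom := hasSum_geometric_two' x
  have hhalf := Real.hasSum_pow_div_log_of_abs_lt_one (x := 1 / 2) (by norm_num [abs_of_pos])
  have hshift := Real.hasSum_pow_div_log_of_abs_lt_one (x := (1 - x) / 2)
    (by rw [abs_div, abs_two, div_lt_one two_pos, abs_lt]; constructor <;> linarith)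
  have hvalue : x - (-Real.log (1 - 1 / 2) - -Real.log (1 - (1 - x) / 2)) =
      x - Real.log (1 + x) := by
    rw [show 1 - (1 - x) / 2 = (1 + x) / 2 by ring, Real.log_div (by linarith) two_ne_zero,
      show (1 : ℝ) - 1 / 2 = 2⁻¹ by norm_num, Real.log_inv]
    ring
  refine hvalue ▸ (hgeom.sub (hhalf.sub hshift)).congr_fun fun n => ?_
  rw [div_pow, div_pow]
  field_simp
  ring

theorem hasSum_inv_sub_log_one_add_inv :
    HasSum (fun m : ℕ => ((m : ℝ) + 1)⁻¹ - Real.log (1 + ((m : ℝ) + 1)⁻¹))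
      Real.eulerMascheroniConstant := by
  have hlog (m : ℕ) :
      Real.log (1 + ((m : ℝ) + 1)⁻¹) = Real.log ((m + 1 : ℕ) + 1) - Real.log (m + 1) := by
    rw [← Real.log_div (by positivity) (by positivity)]
    congr 1
    field_simp
    push_cast
    ring
  have hpartial (N : ℕ) :
      ∑ m ∈ range N, (((m : ℝ) + 1)⁻¹ - Real.log (1 + ((m : ℝ) + 1)⁻¹)) =
        harmonic N - Real.log (N + 1) := by
    simp only [sum_sub_distrib, hlog, sum_range_sub (fun m : ℕ => Real.log ((m : ℝ) + 1)),
      harmonic]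
    push_cast
    simp
  rw [hasSum_iff_tendsto_nat_of_nonneg, funext hpartial]
  · exact Real.tendsto_harmonic_sub_log_add_one
  · intro m
    have := Real.log_le_sub_one_of_pos (x := 1 + ((m : ℝ) + 1)⁻¹) (by positivity)
    linarith

theorem hasSum_tsum_comm_of_nonneg {β γ : Type*} {f : β → γ → ℝ} (hf : ∀ b c, 0 ≤ f b c)
    {g : γ → ℝ} {a : ℝ} (hg : ∀ c, HasSum (fun b => f b c) (g c)) (ha : HasSum g a) :
    HasSum (fun b => ∑' c, f b c) a := by
  set F : γ × β → ℝ := fun p => f p.2 p.1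
  have hF : Summable F := (summable_prod_of_nonneg fun p => hf _ _).2
    ⟨fun c => (hg c).summable, by simpa only [F, (hg _).tsum_eq] using ha.summable⟩
  have hFa : HasSum F a := (hF.hasSum.prod_fiberwise hg).unique ha ▸ hF.hasSum
  exact ((Equiv.prodComm β γ).hasSum_iff.2 hFa).prod_fiberwise
    fun b => (hF.prod_symm.prod_factor b).hasSum

theorem hasSum_div_two_pow_mul_tsum :
    HasSum (fun n : ℕ => 1 / 2 ^ (n + 1) *
        ∑' m : ℕ, (((m : ℝ) + 1)⁻¹ - (1 - (1 - ((m : ℝ) + 1)⁻¹) ^ (n + 1)) / (n + 1)))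
      Real.eulerMascheroniConstant := by
  have hx₀ (m : ℕ) : 0 < ((m : ℝ) + 1)⁻¹ := by positivity
  have hx₁ (m : ℕ) : ((m : ℝ) + 1)⁻¹ ≤ 1 := inv_le_one_of_one_le₀ (by simp)
  simp only [← tsum_mul_left]
  exact hasSum_tsum_comm_of_nonneg
    (fun n m => mul_nonneg (by positivity)
      (sub_nonneg.2 (one_sub_one_sub_pow_div_le (by linarith [hx₁ m]) n)))
    (fun m => hasSum_div_two_pow_mul (by linarith [hx₀ m]) (by linarith [hx₁ m]))
    hasSum_inv_sub_log_one_add_inv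

theorem hasSum_riemannZeta_nat {k : ℕ} (hk : 1 < k) :
    HasSum (fun m : ℕ => ((((m : ℝ) + 1)⁻¹ ^ k : ℝ) : ℂ)) (riemannZeta k) := by
  have hsum : Summable (fun m : ℕ => ((m : ℝ) + 1)⁻¹ ^ k) := by
    simpa [inv_pow] using (summable_nat_add_iff 1).2 (Real.summable_nat_pow_inv.2 hk)
  convert Complex.hasSum_ofReal.2 hsum.hasSum using 1
  rw [Complex.ofReal_tsum, zeta_eq_tsum_one_div_nat_add_one_cpow (by norm_cast)]
  refine tsum_congr fun m => ?_
  rw [Complex.cpow_natCast]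
  push_cast
  ring

theorem sum_choose_mul_riemannZeta_eq_tsum (n : ℕ) :
    ∑ k ∈ Icc 1 n, (n.choose k : ℂ) * (-1) ^ (k - 1) * riemannZeta ((k : ℂ) + 1) / ((k : ℂ) + 1) =
      ↑(∑' m : ℕ, (((m : ℝ) + 1)⁻¹ - (1 - (1 - ((m : ℝ) + 1)⁻¹) ^ (n + 1)) / (n + 1))) := by
  have hterm : ∀ k ∈ Icc 1 n, HasSum
      (fun m : ℕ =>
        (((n.choose k : ℝ) * (-1) ^ (k - 1) * ((m : ℝ) + 1)⁻¹ ^ (k + 1) / (k + 1) : ℝ) : ℂ))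
      ((n.choose k : ℂ) * (-1) ^ (k - 1) * riemannZeta ((k : ℂ) + 1) / ((k : ℂ) + 1)) := by
    intro k hk
    have hk : 1 < k + 1 := by simp only [mem_Icc] at hk; omega
    have h := ((hasSum_riemannZeta_nat hk).mul_left ((n.choose k : ℂ) * (-1) ^ (k - 1))).div_const
      ((k : ℂ) + 1)
    push_cast at h ⊢
    exact h
  have h := hasSum_sum hterm
  simp only [← Complex.ofReal_sum, sum_Icc_choose_mul_pow_div] at h
  rw [← h.tsum_eq, Complex.ofReal_tsum]

theorem eulerGamma_series :
    (Real.eulerMascheroniConstant : ℂ) =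
      ∑' n : ℕ, (1 / 2 ^ (n + 1) : ℂ) *
        ∑ k ∈ Icc 1 n, (n.choose k : ℂ) * (-1) ^ (k - 1) *
          riemannZeta ((k : ℂ) + 1) / ((k : ℂ) + 1) := by
  rw [← hasSum_div_two_pow_mul_tsum.tsum_eq, Complex.ofReal_tsum]
  refine tsum_congr fun n => ?_
  rw [sum_choose_mul_riemannZeta_eq_tsum, Complex.ofReal_mul]
  push_cast
  rfl
end

section
/- For every natural number n ≥ 1, 1/2^{n+1} < ζ(n+1) - 1 < (1/2^{n+1})(1 + 2/n). -/
/-!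
Write `ζ(n + 1) - 1 = 2^{-(n+1)} + ∑_{k ≥ 3} k^{-(n+1)}`; the lower bound is the positivity of the
tail. For the upper bound, Bernoulli's inequality gives
`(x + 1)^{-(n+1)} < (x^{-n} - (x + 1)^{-n}) / n` for `x > 0`, and the right-hand sides telescope,
so the tail is less than `2^{-n} / n`.
-/

open Filter Topology

lemma hasSum_one_div_two_add_nat_pow {k : ℕ} (hk : 1 < k) :
    HasSum (fun i : ℕ => 1 / (2 + i : ℝ) ^ k) ((riemannZeta k).re - 1) := by
  have hsum : Summable (fun n : ℕ => 1 / (n : ℝ) ^ k) := Real.summable_one_div_nat_pow.mpr hk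
  have hζ : (riemannZeta k).re = ∑' n : ℕ, 1 / (n : ℝ) ^ k := by
    rw [zeta_nat_eq_tsum_of_gt_one hk, ← Complex.ofReal_re (∑' n : ℕ, 1 / (n : ℝ) ^ k),
      Complex.ofReal_tsum]
    push_cast
    rfl
  simpa [Finset.sum_range_succ, hζ, add_comm, zero_pow (by omega : k ≠ 0)] using
    (hasSum_nat_add_iff' 2).mpr hsum.hasSum

lemma hasSum_sub_succ_of_antitone {a : ℕ → ℝ} {l : ℝ} (ha : Antitone a)
    (hl : Tendsto a atTop (𝓝 l)) : HasSum (fun i => a i - a (i + 1)) (a 0 - l) := by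
  rw [hasSum_iff_tendsto_nat_of_nonneg fun i => sub_nonneg.2 (ha i.le_succ)]
  simp_rw [Finset.sum_range_sub']
  exact tendsto_const_nhds.sub hl

lemma one_div_add_one_pow_succ_lt {x : ℝ} (hx : 0 < x) {n : ℕ} (hn : n ≠ 0) :
    1 / (x + 1) ^ (n + 1) < (1 / x ^ n - 1 / (x + 1) ^ n) / n := by
  obtain ⟨m, rfl⟩ := Nat.exists_eq_add_one_of_ne_zero hn
  have hbernoulli : x ^ (m + 1) + (m + 1) * x ^ m ≤ (x + 1) ^ (m + 1) := by
    simpa using pow_add_mul_le_add_pow hx.le (by linarith : (0 : ℝ) ≤ 2 * x + 1) (m + 1)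
  have hcore : (m + 1) * x ^ (m + 1) < (x + 1) * ((x + 1) ^ (m + 1) - x ^ (m + 1)) :=
    calc (m + 1) * x ^ (m + 1) < (m + 1) * x ^ (m + 1) + (m + 1) * x ^ m := by
          have := pow_pos hx m
          linarith [mul_pos (by positivity : (0 : ℝ) < m + 1) this]
      _ = (x + 1) * ((m + 1) * x ^ m) := by ring
      _ ≤ (x + 1) * ((x + 1) ^ (m + 1) - x ^ (m + 1)) := by gcongr; linarith
  rw [div_sub_div _ _ (by positivity) (by positivity), div_div,
    div_lt_div_iff₀ (by positivity) (by positivity), pow_succ (x + 1) (m + 1)]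
  push_cast
  linear_combination (x + 1) ^ (m + 1) * hcore

lemma tsum_one_div_add_nat_succ_pow_succ_lt {x : ℝ} (hx : 0 < x) {n : ℕ} (hn : n ≠ 0) :
    ∑' i : ℕ, 1 / (x + (i + 1)) ^ (n + 1) < 1 / (n * x ^ n) := by
  set a : ℕ → ℝ := fun i => 1 / (x + i) ^ n
  have ha : Antitone a := fun i j hij => by
    dsimp only [a]
    gcongr
  have hl : Tendsto a atTop (𝓝 0) := by
    have hpow : Tendsto (fun i : ℕ => (x + i) ^ n) atTop atTop :=
      (tendsto_pow_atTop hn).comp (tendsto_atTop_add_const_left _ x tendsto_natCast_atTop_atTop)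
    simp_rw [a, one_div]
    exact hpow.inv_tendsto_atTop
  have htelescope := (hasSum_sub_succ_of_antitone ha hl).div_const n
  have hlt : ∀ i : ℕ, 1 / (x + (i + 1)) ^ (n + 1) < (a i - a (i + 1)) / n := fun i => by
    simpa [a, add_assoc] using one_div_add_one_pow_succ_lt (by positivity : 0 < x + i) hn
  have hsum : Summable fun i : ℕ => 1 / (x + (i + 1)) ^ (n + 1) :=
    .of_nonneg_of_le (fun i => by positivity) (fun i => (hlt i).le) htelescope.summable
  calc _ < (a 0 - 0) / n := hasSum_lt (fun i => (hlt i).le) (hlt 0) hsum.hasSum htelescope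
    _ = 1 / (n * x ^ n) := by
      simp only [a, one_div, CharP.cast_eq_zero, add_zero, sub_zero, mul_inv_rev]
      ring

theorem zeta_estimate (n : ℕ) (hn : 1 ≤ n) :
    (1 / 2 ^ (n + 1) : ℝ) < (riemannZeta ((n : ℂ) + 1)).re - 1 ∧
    (riemannZeta ((n : ℂ) + 1)).re - 1 < (1 / 2 ^ (n + 1) : ℝ) * (1 + 2 / (n : ℝ)) := by
  have hζ := hasSum_one_div_two_add_nat_pow (k := n + 1) (by omega)
  push_cast at hζ
  rw [← hζ.tsum_eq, hζ.summable.tsum_eq_zero_add]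
  have htail_pos : 0 < ∑' i : ℕ, 1 / (2 + ((i + 1 : ℕ) : ℝ)) ^ (n + 1) :=
    ((summable_nat_add_iff 1).mpr hζ.summable).tsum_pos (fun i => by positivity) 0 (by positivity)
  have htail_lt := tsum_one_div_add_nat_succ_pow_succ_lt two_pos (n := n) (by omega)
  have hbound : (1 / 2 ^ (n + 1) : ℝ) * (1 + 2 / n) = 1 / 2 ^ (n + 1) + 1 / (n * 2 ^ n) := by
    field_simp
    ring
  push_cast at htail_pos ⊢
  constructor <;> linarith
end
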